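/- Let M, N ∈ ℝ^{p×q} be real matrices and let k be an integer with 1 ≤ k ≤ min(p,q). Then ‖M‖_* − ‖N‖_* ≤ Σ_{i=k+1}^{min(p,q)} σ_i(M) + k·‖M − N‖. -/

import Mathlib

open scoped BigOperators

theorem Matrix.isHermitian_transpose_mul_self {m n : Type*} [Fintype m] {α : Type*}
    [CommRing α] [StarRing α] [TrivialStar α] (A : Matrix m n α) :
    (Matrix.transpose A * A).IsHermitian :=
  Matrix.isHermitian_iff_isSymm.mpr (by
    rw [Matrix.IsSymm, Matrix.transpose_mul, Matrix.transpose_transpose])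

/-- `sval M i` is the `i`-th (0-indexed, in nonincreasing order) singular value of the
real matrix `M`, i.e. the square root of the `i`-th largest eigenvalue of `MᵀM`,
with the convention that it is `0` out of range. -/
noncomputable def sval {p q : ℕ} (M : Matrix (Fin p) (Fin q) ℝ) : ℕ → ℝ := fun i =>
  if h : i < q then
    Real.sqrt ((Matrix.isHermitian_transpose_mul_self M).eigenvalues
      ((Tuple.sort (Matrix.isHermitian_transpose_mul_self M).eigenvalues) (Fin.rev ⟨i, h⟩)))
  else 0

/-- The spectral norm `‖M‖ = σ₁(M)`. -/
noncomputable def specNorm {p q : ℕ} (M : Matrix (Fin p) (Fin q) ℝ) : ℝ := sval M 0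

/-- The Ky Fan `k`-norm `‖M‖_k = σ₁(M) + ⋯ + σ_k(M)`. -/
noncomputable def kyFan {p q : ℕ} (M : Matrix (Fin p) (Fin q) ℝ) (k : ℕ) : ℝ :=
  ∑ i ∈ Finset.range k, sval M i

/-- The nuclear norm `‖M‖_* = Σᵢ σᵢ(M)`. -/
noncomputable def nucNorm {p q : ℕ} (M : Matrix (Fin p) (Fin q) ℝ) : ℝ :=
  kyFan M (min p q)

/-- The Frobenius norm `‖M‖_F`. -/
noncomputable def froNorm {p q : ℕ} (M : Matrix (Fin p) (Fin q) ℝ) : ℝ :=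
  Real.sqrt (∑ i, ∑ j, (M i j) ^ 2)

/-!
Weyl's inequality `σᵢ(M) ≤ σᵢ(N) + ‖M - N‖` does all the work. The eigenvectors of `MᵀM` for its
`i + 1` largest eigenvalues span a subspace on which `‖Mx‖ ≥ σᵢ(M)‖x‖`, and those of `NᵀN` for its
`q - i` smallest eigenvalues span one on which `‖Nx‖ ≤ σᵢ(N)‖x‖`. Their dimensions add up to more
than `q`, so they share a nonzero vector `x`, and there
`σᵢ(M)‖x‖ ≤ ‖Mx‖ ≤ ‖Nx‖ + ‖(M - N)x‖ ≤ (σᵢ(N) + ‖M - N‖)‖x‖`.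
Summing over `i < k` gives `‖M‖_k ≤ ‖N‖_k + k‖M - N‖ ≤ ‖N‖_* + k‖M - N‖`, and `‖M‖_*` is `‖M‖_k`
plus the tail `σ_{k+1}(M) + ⋯`.
-/

open Matrix Submodule Module
open scoped RealInnerProductSpace

namespace OrthonormalBasis

variable {F : Type*} [NormedAddCommGroup F] [InnerProductSpace ℝ F] {T : F →ₗ[ℝ] F}

section

variable {ι : Type*} [Fintype ι] (v : OrthonormalBasis ι ℝ F) {e : ι → ℝ}

lemma norm_sq_eq_sum_repr_sq (x : F) : ‖x‖ ^ 2 = ∑ j, v.repr x j ^ 2 := by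
  rw [← v.repr.norm_map x, EuclideanSpace.real_norm_sq_eq]

lemma inner_map_self_eq_sum (hT : ∀ j, T (v j) = e j • v j) (x : F) :
    ⟪x, T x⟫ = ∑ j, e j * v.repr x j ^ 2 := by
  have hTx : T x = ∑ j, (e j * v.repr x j) • v j := by
    conv_lhs => rw [← v.sum_repr x]
    simp only [map_sum, map_smul, hT, smul_smul, mul_comm]
  simp only [hTx, inner_sum, real_inner_smul_right, v.repr_apply_apply, real_inner_comm x]
  exact Finset.sum_congr rfl fun j _ => by ring

lemma inner_map_self_le_of_mem_span (hT : ∀ j, T (v j) = e j • v j) {S : Set ι} {c : ℝ}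
    (hc : ∀ j ∈ S, e j ≤ c) {x : F} (hx : x ∈ span ℝ (v '' S)) :
    ⟪x, T x⟫ ≤ c * ‖x‖ ^ 2 := by
  have hsupp : ∀ j ∉ S, v.repr x j = 0 := fun j hj => by
    rw [← v.coe_toBasis, v.toBasis.mem_span_image] at hx
    simpa [OrthonormalBasis.coe_toBasis_repr_apply] using mt (@hx j) hj
  rw [v.inner_map_self_eq_sum hT, v.norm_sq_eq_sum_repr_sq, Finset.mul_sum]
  refine Finset.sum_le_sum fun j _ => ?_
  by_cases hj : j ∈ S
  · exact mul_le_mul_of_nonneg_right (hc j hj) (sq_nonneg _)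
  · simp [hsupp j hj]

lemma le_inner_map_self_of_mem_span (hT : ∀ j, T (v j) = e j • v j) {S : Set ι} {c : ℝ}
    (hc : ∀ j ∈ S, c ≤ e j) {x : F} (hx : x ∈ span ℝ (v '' S)) :
    c * ‖x‖ ^ 2 ≤ ⟪x, T x⟫ := by
  have h := v.inner_map_self_le_of_mem_span (T := -T) (e := -e)
    (fun j => by simp [hT]) (c := -c) (fun j hj => neg_le_neg (hc j hj)) hx
  simp only [LinearMap.neg_apply, inner_neg_right] at h
  linarith

lemma finrank_span_image (S : Finset ι) : finrank ℝ (span ℝ (v '' S)) = S.card := by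
  rw [Set.image_eq_range, finrank_span_eq_card (b := fun j : (S : Set ι) => v j)
    (v.orthonormal.linearIndependent.comp _ Subtype.val_injective)]
  simp

end

variable {q : ℕ} (v : OrthonormalBasis (Fin q) ℝ F) {e : Fin q → ℝ}

lemma exists_finrank_eq_forall_le_inner_map_self (hT : ∀ j, T (v j) = e j • v j) (r : Fin q) :
    ∃ U : Submodule ℝ F, finrank ℝ U = q - r ∧
      ∀ x ∈ U, e (Tuple.sort e r) * ‖x‖ ^ 2 ≤ ⟪x, T x⟫ := by
  refine ⟨span ℝ (v '' ((Finset.Ici r).map (Tuple.sort e).toEmbedding)), ?_, fun x hx => ?_⟩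
  · rw [finrank_span_image, Finset.card_map, Fin.card_Ici]
  · refine v.le_inner_map_self_of_mem_span hT (fun j hj => ?_) hx
    obtain ⟨i, hi, rfl⟩ := Finset.mem_map.mp hj
    exact Tuple.monotone_sort e (Finset.mem_Ici.mp hi)

lemma exists_finrank_eq_forall_inner_map_self_le (hT : ∀ j, T (v j) = e j • v j) (r : Fin q) :
    ∃ W : Submodule ℝ F, finrank ℝ W = r + 1 ∧
      ∀ x ∈ W, ⟪x, T x⟫ ≤ e (Tuple.sort e r) * ‖x‖ ^ 2 := by
  refine ⟨span ℝ (v '' ((Finset.Iic r).map (Tuple.sort e).toEmbedding)), ?_, fun x hx => ?_⟩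
  · rw [finrank_span_image, Finset.card_map, Fin.card_Iic]
  · refine v.inner_map_self_le_of_mem_span hT (fun j hj => ?_) hx
    obtain ⟨i, hi, rfl⟩ := Finset.mem_map.mp hj
    exact Tuple.monotone_sort e (Finset.mem_Iic.mp hi)

end OrthonormalBasis

namespace Matrix

lemma IsHermitian.toEuclideanLin_eigenvectorBasis {n : Type*} [Fintype n] [DecidableEq n]
    {A : Matrix n n ℝ} (hA : A.IsHermitian) (j : n) :
    toEuclideanLin A (hA.eigenvectorBasis j) = hA.eigenvalues j • hA.eigenvectorBasis j := by
  ext i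
  simpa using congrFun (hA.mulVec_eigenvectorBasis j) i

lemma inner_toEuclideanLin_transpose_mul_self {m n : Type*} [Fintype m] [Fintype n]
    [DecidableEq m] [DecidableEq n] (M : Matrix m n ℝ) (x : EuclideanSpace ℝ n) :
    ⟪x, toEuclideanLin (Mᵀ * M) x⟫ = ‖toEuclideanLin M x‖ ^ 2 := by
  rw [toLpLin_mul 2 2 2, LinearMap.comp_apply, ← conjTranspose_eq_transpose_of_trivial,
    toEuclideanLin_conjTranspose_eq_adjoint, LinearMap.adjoint_inner_right,
    real_inner_self_eq_norm_sq]

end Matrix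

lemma Submodule.exists_mem_ne_zero_of_finrank_lt_add {K V : Type*} [DivisionRing K]
    [AddCommGroup V] [Module K V] [FiniteDimensional K V] {U W : Submodule K V}
    (h : finrank K V < finrank K U + finrank K W) : ∃ x ∈ U, x ∈ W ∧ x ≠ 0 := by
  by_contra! hUW
  exact h.not_ge (Submodule.finrank_add_finrank_le_of_disjoint (Submodule.disjoint_def.mpr hUW))

section

variable {p q : ℕ}

lemma sval_nonneg (M : Matrix (Fin p) (Fin q) ℝ) (i : ℕ) : 0 ≤ sval M i := by
  unfold sval
  split_ifs <;> positivity

lemma sval_of_le (M : Matrix (Fin p) (Fin q) ℝ) {i : ℕ} (hi : q ≤ i) : sval M i = 0 :=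
  dif_neg hi.not_gt

lemma sq_sval (M : Matrix (Fin p) (Fin q) ℝ) {i : ℕ} (hi : i < q) :
    sval M i ^ 2 = (isHermitian_transpose_mul_self M).eigenvalues
      (Tuple.sort (isHermitian_transpose_mul_self M).eigenvalues (Fin.rev ⟨i, hi⟩)) := by
  have hMM : (Mᵀ * M).PosSemidef := by
    simpa only [conjTranspose_eq_transpose_of_trivial] using posSemidef_conjTranspose_mul_self M
  rw [sval, dif_pos hi, Real.sq_sqrt (hMM.eigenvalues_nonneg _)]

lemma exists_finrank_eq_forall_sval_mul_norm_le (M : Matrix (Fin p) (Fin q) ℝ) {i : ℕ}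
    (hi : i < q) : ∃ U : Submodule ℝ (EuclideanSpace ℝ (Fin q)), finrank ℝ U = i + 1 ∧
      ∀ x ∈ U, sval M i * ‖x‖ ≤ ‖toEuclideanLin M x‖ := by
  have hM := isHermitian_transpose_mul_self M
  obtain ⟨U, hU, hUx⟩ := hM.eigenvectorBasis.exists_finrank_eq_forall_le_inner_map_self
    hM.toEuclideanLin_eigenvectorBasis (Fin.rev ⟨i, hi⟩)
  refine ⟨U, by simp only [hU, Fin.val_rev]; omega, fun x hx => ?_⟩
  have hsq := hUx x hx
  rw [← sq_sval M hi, inner_toEuclideanLin_transpose_mul_self, ← mul_pow] at hsq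
  exact le_of_pow_le_pow_left₀ two_ne_zero (norm_nonneg _) hsq

lemma exists_finrank_eq_forall_norm_le_sval_mul (M : Matrix (Fin p) (Fin q) ℝ) {i : ℕ}
    (hi : i < q) : ∃ W : Submodule ℝ (EuclideanSpace ℝ (Fin q)), finrank ℝ W = q - i ∧
      ∀ x ∈ W, ‖toEuclideanLin M x‖ ≤ sval M i * ‖x‖ := by
  have hM := isHermitian_transpose_mul_self M
  obtain ⟨W, hW, hWx⟩ := hM.eigenvectorBasis.exists_finrank_eq_forall_inner_map_self_le
    hM.toEuclideanLin_eigenvectorBasis (Fin.rev ⟨i, hi⟩)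
  refine ⟨W, by simp only [hW, Fin.val_rev]; omega, fun x hx => ?_⟩
  have hsq := hWx x hx
  rw [← sq_sval M hi, inner_toEuclideanLin_transpose_mul_self, ← mul_pow] at hsq
  exact le_of_pow_le_pow_left₀ two_ne_zero (by have := sval_nonneg M i; positivity) hsq

lemma norm_toEuclideanLin_le_specNorm_mul (M : Matrix (Fin p) (Fin q) ℝ)
    (x : EuclideanSpace ℝ (Fin q)) : ‖toEuclideanLin M x‖ ≤ specNorm M * ‖x‖ := by
  rcases Nat.eq_zero_or_pos q with rfl | hq
  · simp [Subsingleton.elim x 0]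
  obtain ⟨W, hW, hWx⟩ := exists_finrank_eq_forall_norm_le_sval_mul M hq
  have hWtop : W = ⊤ := Submodule.eq_top_of_finrank_eq (by simp [hW])
  exact hWx x (hWtop ▸ mem_top)

/-- Weyl's inequality for singular values. -/
theorem sval_le_sval_add_specNorm_sub (M N : Matrix (Fin p) (Fin q) ℝ) (i : ℕ) :
    sval M i ≤ sval N i + specNorm (M - N) := by
  rcases le_or_gt q i with hi | hi
  · rw [sval_of_le M hi, sval_of_le N hi, zero_add]
    exact sval_nonneg _ 0
  obtain ⟨U, hU, hUx⟩ := exists_finrank_eq_forall_sval_mul_norm_le M hi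
  obtain ⟨W, hW, hWx⟩ := exists_finrank_eq_forall_norm_le_sval_mul N hi
  obtain ⟨x, hxU, hxW, hx0⟩ := Submodule.exists_mem_ne_zero_of_finrank_lt_add
    (by rw [hU, hW, finrank_euclideanSpace_fin]; omega : finrank ℝ _ < finrank ℝ U + finrank ℝ W)
  refine le_of_mul_le_mul_right ?_ (norm_pos_iff.mpr hx0)
  calc sval M i * ‖x‖ ≤ ‖toEuclideanLin M x‖ := hUx x hxU
    _ = ‖toEuclideanLin N x + toEuclideanLin (M - N) x‖ := by
      rw [map_sub, LinearMap.sub_apply, add_sub_cancel]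
    _ ≤ ‖toEuclideanLin N x‖ + ‖toEuclideanLin (M - N) x‖ := norm_add_le _ _
    _ ≤ sval N i * ‖x‖ + specNorm (M - N) * ‖x‖ :=
      add_le_add (hWx x hxW) (norm_toEuclideanLin_le_specNorm_mul _ x)
    _ = (sval N i + specNorm (M - N)) * ‖x‖ := by ring

lemma kyFan_le_kyFan_add_mul_specNorm_sub (M N : Matrix (Fin p) (Fin q) ℝ) (k : ℕ) :
    kyFan M k ≤ kyFan N k + k * specNorm (M - N) :=
  calc kyFan M k ≤ ∑ i ∈ Finset.range k, (sval N i + specNorm (M - N)) :=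
        Finset.sum_le_sum fun i _ => sval_le_sval_add_specNorm_sub M N i
    _ = kyFan N k + k * specNorm (M - N) := by
        rw [Finset.sum_add_distrib, Finset.sum_const, Finset.card_range, nsmul_eq_mul, kyFan]

lemma kyFan_le_nucNorm (M : Matrix (Fin p) (Fin q) ℝ) {k : ℕ} (hk : k ≤ min p q) :
    kyFan M k ≤ nucNorm M :=
  Finset.sum_le_sum_of_subset_of_nonneg (Finset.range_subset_range.mpr hk)
    fun i _ _ => sval_nonneg M i

lemma nucNorm_eq_kyFan_add_sum_Ico (M : Matrix (Fin p) (Fin q) ℝ) {k : ℕ} (hk : k ≤ min p q) :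
    nucNorm M = kyFan M k + ∑ i ∈ Finset.Ico k (min p q), sval M i :=
  (Finset.sum_range_add_sum_Ico _ hk).symm

end

theorem nucNorm_sub_le_tail_add_kyFan_pert_general
    {p q : ℕ} (M N : Matrix (Fin p) (Fin q) ℝ)
    (k : ℕ) (hk : k ≤ min p q) :
    nucNorm M - nucNorm N ≤
      (∑ i ∈ Finset.Ico k (min p q), sval M i) + (k : ℝ) * specNorm (M - N) := by
  have hM := nucNorm_eq_kyFan_add_sum_Ico M hk
  have hweyl := kyFan_le_kyFan_add_mul_specNorm_sub M N k
  have hN := kyFan_le_nucNorm N hk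
  linarith

/-- Lemma 4 of the paper:
`‖M‖_* − ‖N‖_* ≤ Σ_{i=k+1}^{min(p,q)} σᵢ(M) + k‖M − N‖`. -/
theorem nucNorm_sub_le_tail_add_kyFan_pert
    {p q : ℕ} (M N : Matrix (Fin p) (Fin q) ℝ)
    (k : ℕ) (hk1 : 1 ≤ k) (hk : k ≤ min p q) :
    nucNorm M - nucNorm N ≤
      (∑ i ∈ Finset.Ico k (min p q), sval M i) + (k : ℝ) * specNorm (M - N) :=
  nucNorm_sub_le_tail_add_kyFan_pert_general M N k hk
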